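/- Let G be a group satisfying the 5-Engel identity [x,y,y,y,y,y] = 1 for all x, y ∈ G. Then for all x, y, z ∈ G the left-normed commutator [x,z,y,z,z,z,z] lies in γ_8(G), the eighth term of the lower central series of G. -/

import Mathlib

/-!
Write `[g, z, …, z]` for `(gc · z)^[n] g`. By the three subgroups lemma `[γᵢ, γⱼ] ≤ γᵢ₊ⱼ`, so
for `a, d, b ∈ γₘ` (`m ≥ 2`) and `e ∈ γₘ₊₂` we get `[a d b e, z] ≡ [a, z] [d, z] [b, z]` modulo
`γₘ₊₃`: bracketing with `z` is multiplicative up to an error two steps deeper. Starting from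
`[xy, z] = [x, z] [x, z, y] [y, z]` and bracketing four more times with `z` gives, modulo `γ₈`,
`[xy, z, z, z, z, z] ≡ [x, z, z, z, z, z] · [x, z, y, z, z, z, z] · [y, z, z, z, z, z]`.
The 5-Engel law kills the left-hand side and the two outer factors.
Here `γₙ₊₁` is `(⊤ : Subgroup G).lowerCentralSeries n`.
-/

/-- The commutator `[a,b] = a⁻¹ b⁻¹ a b`. -/
def gc {G : Type*} [Group G] (a b : G) : G := a⁻¹ * b⁻¹ * a * b

open Subgroup
open scoped commutatorElement

section

variable {G : Type*} [Group G]

theorem commutator_commutator_le_of_rotate {H₁ H₂ H₃ N : Subgroup G} [N.Normal]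
    (h1 : ⁅⁅H₂, H₃⁆, H₁⁆ ≤ N) (h2 : ⁅⁅H₃, H₁⁆, H₂⁆ ≤ N) : ⁅⁅H₁, H₂⁆, H₃⁆ ≤ N := by
  have modN : ∀ K₁ K₂ K₃ : Subgroup G, ⁅⁅K₁, K₂⁆, K₃⁆ ≤ N ↔
      ⁅⁅K₁.map (QuotientGroup.mk' N), K₂.map (QuotientGroup.mk' N)⁆,
        K₃.map (QuotientGroup.mk' N)⁆ = ⊥ := by
    intro K₁ K₂ K₃
    rw [← map_commutator, ← map_commutator, Subgroup.map_eq_bot_iff, QuotientGroup.ker_mk']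
  rw [modN] at h1 h2 ⊢
  exact commutator_commutator_eq_bot_of_rotate h1 h2

theorem commutator_lowerCentralSeries_le (i j : ℕ) :
    ⁅(⊤ : Subgroup G).lowerCentralSeries i, (⊤ : Subgroup G).lowerCentralSeries j⁆ ≤
      (⊤ : Subgroup G).lowerCentralSeries (i + j + 1) := by
  induction j generalizing i with
  | zero => rfl
  | succ j ih =>
    rw [commutator_comm, Subgroup.lowerCentralSeries_succ]
    apply commutator_commutator_le_of_rotate
    · rw [commutator_comm ⊤, ← Subgroup.lowerCentralSeries_succ]
      exact (ih (i + 1)).trans_eq (by rw [add_right_comm i 1 j, add_assoc i j 1])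
    · calc ⁅⁅(⊤ : Subgroup G).lowerCentralSeries i, (⊤ : Subgroup G).lowerCentralSeries j⁆, ⊤⁆
          ≤ (⊤ : Subgroup G).lowerCentralSeries (i + j + 1 + 1) := commutator_mono (ih i) le_rfl
        _ = (⊤ : Subgroup G).lowerCentralSeries (i + (j + 1) + 1) := by rw [add_assoc i j 1]

theorem gc_mem_lowerCentralSeries {i j : ℕ} {a b : G}
    (ha : a ∈ (⊤ : Subgroup G).lowerCentralSeries i)
    (hb : b ∈ (⊤ : Subgroup G).lowerCentralSeries j) :
    gc a b ∈ (⊤ : Subgroup G).lowerCentralSeries (i + j + 1) := by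
  have : gc a b = ⁅a⁻¹, b⁻¹⁆ := by simp only [gc, commutatorElement_def, inv_inv]
  rw [this]
  exact commutator_lowerCentralSeries_le i j (commutator_mem_commutator (inv_mem ha) (inv_mem hb))

theorem gc_mem_lowerCentralSeries_succ {i : ℕ} {a : G}
    (ha : a ∈ (⊤ : Subgroup G).lowerCentralSeries i) (b : G) :
    gc a b ∈ (⊤ : Subgroup G).lowerCentralSeries (i + 1) :=
  gc_mem_lowerCentralSeries (j := 0) ha (mem_top b)

theorem gc_mul_mul_mul (a d b e z : G) :
    gc (a * d * b * e) z = gc a z * gc d z * gc b z *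
      ((gc d z * gc b z)⁻¹ * gc (gc a z) (d * b * e) * (gc d z * gc b z) *
        ((gc b z)⁻¹ * gc (gc d z) (b * e) * gc b z) * gc (gc b z) e * gc e z) := by
  simp only [gc]
  group

theorem exists_gc_mul_mul_mul_eq {k : ℕ} {a d b e : G}
    (ha : a ∈ (⊤ : Subgroup G).lowerCentralSeries (k + 1))
    (hd : d ∈ (⊤ : Subgroup G).lowerCentralSeries (k + 1))
    (hb : b ∈ (⊤ : Subgroup G).lowerCentralSeries (k + 1))
    (he : e ∈ (⊤ : Subgroup G).lowerCentralSeries (k + 3)) (z : G) :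
    ∃ e' ∈ (⊤ : Subgroup G).lowerCentralSeries (k + 4),
      gc (a * d * b * e) z = gc a z * gc d z * gc b z * e' := by
  have hN : ((⊤ : Subgroup G).lowerCentralSeries (k + 4)).Normal := lowerCentralSeries_normal _ _
  have hdeep {n : ℕ} {g : G} (hn : k + 4 ≤ n) (hg : g ∈ (⊤ : Subgroup G).lowerCentralSeries n) :
      g ∈ (⊤ : Subgroup G).lowerCentralSeries (k + 4) :=
    Subgroup.lowerCentralSeries_antitone _ hn hg
  have he' : e ∈ (⊤ : Subgroup G).lowerCentralSeries (k + 1) :=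
    Subgroup.lowerCentralSeries_antitone _ (by omega) he
  have hbe := mul_mem hb he'
  have hdbe := mul_mem (mul_mem hd hb) he'
  refine ⟨_, ?_, gc_mul_mul_mul a d b e z⟩
  refine mul_mem (mul_mem (mul_mem (hN.conj_mem' _ ?_ _) (hN.conj_mem' _ ?_ _)) ?_) ?_
  · exact hdeep (by omega) (gc_mem_lowerCentralSeries (gc_mem_lowerCentralSeries_succ ha z) hdbe)
  · exact hdeep (by omega) (gc_mem_lowerCentralSeries (gc_mem_lowerCentralSeries_succ hd z) hbe)
  · exact hdeep (by omega) (gc_mem_lowerCentralSeries (gc_mem_lowerCentralSeries_succ hb z) he)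
  · exact gc_mem_lowerCentralSeries_succ he z

theorem iterate_gc_mem_lowerCentralSeries {i : ℕ} {g : G}
    (hg : g ∈ (⊤ : Subgroup G).lowerCentralSeries i) (z : G) (n : ℕ) :
    (gc · z)^[n] g ∈ (⊤ : Subgroup G).lowerCentralSeries (i + n) := by
  induction n with
  | zero => exact hg
  | succ n ih =>
    rw [Function.iterate_succ_apply']
    exact gc_mem_lowerCentralSeries_succ ih z

theorem exists_iterate_gc_mul_eq (x y z : G) (n : ℕ) :
    ∃ e ∈ (⊤ : Subgroup G).lowerCentralSeries (n + 3),
      (gc · z)^[n + 1] (x * y) =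
        (gc · z)^[n] (gc x z) * (gc · z)^[n] (gc (gc x z) y) * (gc · z)^[n] (gc y z) * e := by
  induction n with
  | zero =>
    refine ⟨1, one_mem _, ?_⟩
    change gc (x * y) z = gc x z * gc (gc x z) y * gc y z * 1
    simp only [gc]
    group
  | succ n ih =>
    obtain ⟨e, he, hexp⟩ := ih
    have hweight {i : ℕ} {g : G} (hi : 1 ≤ i) (hg : g ∈ (⊤ : Subgroup G).lowerCentralSeries i) :
        (gc · z)^[n] g ∈ (⊤ : Subgroup G).lowerCentralSeries (n + 1) :=
      Subgroup.lowerCentralSeries_antitone _ (by omega) (iterate_gc_mem_lowerCentralSeries hg z n)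
    have hxz := gc_mem_lowerCentralSeries_succ (i := 0) (mem_top x) z
    obtain ⟨e', he', hexp'⟩ := exists_gc_mul_mul_mul_eq (hweight le_rfl hxz)
      (hweight (by omega) (gc_mem_lowerCentralSeries_succ hxz y))
      (hweight le_rfl (gc_mem_lowerCentralSeries_succ (i := 0) (mem_top y) z)) he z
    refine ⟨e', he', ?_⟩
    rw [Function.iterate_succ_apply', hexp, hexp']
    simp only [Function.iterate_succ_apply']

end

/-- In a 5-Engel group `G`, the left-normed commutator `[x,z,y,z,z,z,z]` lies in `γ₈(G)`. -/
theorem fiveEngel_commutator_mem_gamma8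
    (G : Type*) [Group G]
    (h5 : ∀ x y : G, gc (gc (gc (gc (gc x y) y) y) y) y = 1)
    (x y z : G) :
    gc (gc (gc (gc (gc (gc x z) y) z) z) z) z ∈ (⊤ : Subgroup G).lowerCentralSeries 7 := by
  obtain ⟨e, he, hexp⟩ := exists_iterate_gc_mul_eq x y z 4
  have hxy : (gc · z)^[5] (x * y) = 1 := h5 (x * y) z
  have hx : (gc · z)^[4] (gc x z) = 1 := h5 x z
  have hy : (gc · z)^[4] (gc y z) = 1 := h5 y z
  rw [hxy, hx, hy, one_mul, mul_one, eq_comm, mul_eq_one_iff_eq_inv] at hexp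
  rw [show gc (gc (gc (gc (gc (gc x z) y) z) z) z) z = (gc · z)^[4] (gc (gc x z) y) from rfl, hexp]
  exact inv_mem he
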